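/- Let f : ℤ_N × ℤ_T → ℂ be nonzero and let f̂ denote its two-dimensional discrete Fourier transform, f̂(m,n) = (NT)^{-1/2} Σ_{x∈ℤ_N} Σ_{y∈ℤ_T} f(x,y) exp(-2πi(xm/N + yn/T)). Then |supp(f)| · |supp(f̂)| ≥ NT. -/

import Mathlib

/-!
The transform and its inverse both have unimodular kernels, so each is bounded pointwise by the
ℓ¹-norm of the other, up to the factor `1 / √(NT)`. Bounding each ℓ¹-norm by the size of the
support times the sup-norm, and chaining the two estimates, gives
`‖f‖∞ ≤ |supp f| |supp f̂| ‖f‖∞ / (NT)`.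
-/

open scoped BigOperators Classical
noncomputable section

/-- Two-dimensional discrete Fourier transform on ℤ_N × ℤ_T with unitary normalization. -/
def dft2 (N T : ℕ) [NeZero N] [NeZero T] (f : ZMod N × ZMod T → ℂ) : ZMod N × ZMod T → ℂ :=
  fun p => ((1 / Real.sqrt (N * T) : ℝ) : ℂ) *
    ∑ x : ZMod N, ∑ y : ZMod T, f (x, y) *
      Complex.exp (-2 * Real.pi * Complex.I *
        (((x.val * p.1.val : ℕ) : ℂ) / (N : ℂ) + ((y.val * p.2.val : ℕ) : ℂ) / (T : ℂ)))

open Finset ZMod AddChar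

section Uncertainty

variable {ι κ E F : Type*} [Fintype ι] [Fintype κ] [NormedAddCommGroup E] [NormedAddCommGroup F]

lemma sum_norm_le_card_support_mul_norm (f : ι → E) :
    ∑ i, ‖f i‖ ≤ #{i | f i ≠ 0} * ‖f‖ :=
  calc ∑ i, ‖f i‖ = ∑ i with f i ≠ 0, ‖f i‖ :=
        (sum_filter_of_ne fun _ _ h => norm_ne_zero_iff.1 h).symm
    _ ≤ ∑ i with f i ≠ 0, ‖f‖ := sum_le_sum fun i _ => norm_le_pi_norm f i
    _ = #{i | f i ≠ 0} * ‖f‖ := by rw [sum_const, nsmul_eq_mul]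

theorem one_le_mul_card_support_mul_card_support {f : ι → E} {g : κ → F} {a b : ℝ}
    (ha : 0 ≤ a) (hb : 0 ≤ b) (hf : f ≠ 0)
    (hg : ∀ j, ‖g j‖ ≤ a * ∑ i, ‖f i‖) (hgf : ∀ i, ‖f i‖ ≤ b * ∑ j, ‖g j‖) :
    1 ≤ a * b * (#{i | f i ≠ 0} * #{j | g j ≠ 0}) := by
  have hg_norm : ‖g‖ ≤ a * (#{i | f i ≠ 0} * ‖f‖) :=
    (pi_norm_le_iff_of_nonneg (by positivity)).2 fun j =>
      (hg j).trans (by gcongr; exact sum_norm_le_card_support_mul_norm f)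
  have hf_norm : ‖f‖ ≤ b * (#{j | g j ≠ 0} * (a * (#{i | f i ≠ 0} * ‖f‖))) :=
    (pi_norm_le_iff_of_nonneg (by positivity)).2 fun i =>
      (hgf i).trans (by gcongr; exact (sum_norm_le_card_support_mul_norm g).trans (by gcongr))
  have hf_pos : 0 < ‖f‖ := norm_pos_iff.2 hf
  nlinarith

end Uncertainty

lemma norm_ofReal_mul_sum_mul_le {ι : Type*} [Fintype ι] {c : ℝ} (hc : 0 ≤ c) {w v : ι → ℂ}
    (hw : ∀ i, ‖w i‖ = 1) : ‖(c : ℂ) * ∑ i, w i * v i‖ ≤ c * ∑ i, ‖v i‖ := by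
  rw [norm_mul, Complex.norm_of_nonneg hc]
  gcongr
  exact (norm_sum_le _ _).trans_eq (by simp [hw])

lemma one_div_sqrt_mul_one_div_sqrt_mul_self {x : ℝ} (hx : 0 < x) :
    1 / √x * (1 / √x) * x = 1 := by
  rw [div_mul_div_comm, one_mul, Real.mul_self_sqrt hx.le, one_div_mul_cancel hx.ne']

lemma natCast_mul_natCast_pos (N T : ℕ) [NeZero N] [NeZero T] : (0 : ℝ) < N * T := by
  have := NeZero.pos N
  have := NeZero.pos T
  positivity

section Fourier

variable {N T : ℕ} [NeZero N] [NeZero T]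

lemma norm_stdAddChar (j : ZMod N) : ‖(stdAddChar j : ℂ)‖ = 1 := by
  simp [stdAddChar_apply, Circle.norm_coe]

lemma exp_neg_two_pi_I_mul_val_mul_val_div (x m : ZMod N) :
    Complex.exp (-2 * Real.pi * Complex.I * (((x.val * m.val : ℕ) : ℂ) / N)) =
      stdAddChar (-(x * m)) := by
  have h : (-(x * m) : ZMod N) = ((-(x.val * m.val : ℤ) : ℤ) : ZMod N) := by
    push_cast
    simp [ZMod.natCast_val, ZMod.cast_id']
  rw [h, stdAddChar_coe]
  congr 1
  push_cast
  ring

lemma sum_stdAddChar_mul_stdAddChar (p : ZMod N × ZMod T) :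
    ∑ q : ZMod N × ZMod T, stdAddChar (q.1 * p.1) * stdAddChar (q.2 * p.2) =
      if p = 0 then (N * T : ℂ) else 0 := by
  rw [Fintype.sum_prod_type]
  simp only [← Finset.sum_mul_sum]
  rw [sum_mulShift _ (isPrimitive_stdAddChar N), sum_mulShift _ (isPrimitive_stdAddChar T)]
  by_cases hx : p.1 = 0 <;> by_cases hy : p.2 = 0 <;> simp [hx, hy, Prod.ext_iff]

lemma dft2_apply_eq_sum_stdAddChar (f : ZMod N × ZMod T → ℂ) (q : ZMod N × ZMod T) :
    dft2 N T f q = ((1 / Real.sqrt (N * T) : ℝ) : ℂ) *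
      ∑ p : ZMod N × ZMod T, stdAddChar (-(p.1 * q.1)) * stdAddChar (-(p.2 * q.2)) * f p := by
  rw [dft2, Fintype.sum_prod_type]
  congr 1
  refine sum_congr rfl fun x _ => sum_congr rfl fun y _ => ?_
  rw [← exp_neg_two_pi_I_mul_val_mul_val_div, ← exp_neg_two_pi_I_mul_val_mul_val_div,
    ← Complex.exp_add]
  ring_nf

lemma dft2_inversion (f : ZMod N × ZMod T → ℂ) (a : ZMod N × ZMod T) :
    f a = ((1 / Real.sqrt (N * T) : ℝ) : ℂ) *
      ∑ q : ZMod N × ZMod T, stdAddChar (a.1 * q.1) * stdAddChar (a.2 * q.2) * dft2 N T f q := by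
  set s : ℂ := ((1 / Real.sqrt (N * T) : ℝ) : ℂ)
  have hs : s * s * (N * T) = 1 := by
    simp only [s]
    exact_mod_cast one_div_sqrt_mul_one_div_sqrt_mul_self (natCast_mul_natCast_pos N T)
  have hshift {M : ℕ} [NeZero M] (u v w : ZMod M) :
      stdAddChar (u * w) * stdAddChar (-(v * w)) = stdAddChar (w * (u - v)) := by
    rw [← map_add_eq_mul]; ring_nf
  symm
  calc s * ∑ q, stdAddChar (a.1 * q.1) * stdAddChar (a.2 * q.2) * dft2 N T f q
      = s * s * ∑ p, f p * ∑ q : ZMod N × ZMod T,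
          stdAddChar (q.1 * (a - p).1) * stdAddChar (q.2 * (a - p).2) := by
        simp_rw [dft2_apply_eq_sum_stdAddChar, mul_sum, Prod.fst_sub, Prod.snd_sub, ← hshift]
        rw [sum_comm]
        refine sum_congr rfl fun p _ => sum_congr rfl fun q _ => ?_
        ring
    _ = s * s * ∑ p, f p * if a - p = 0 then (N * T : ℂ) else 0 := by
        simp_rw [sum_stdAddChar_mul_stdAddChar]
    _ = f a := by
        simp_rw [sub_eq_zero, mul_ite, mul_zero, sum_ite_eq, mem_univ, if_true]
        linear_combination f a * hs

end Fourier

/-- Two-dimensional discrete uncertainty principle: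
`|supp f| * |supp f̂| ≥ N * T` for nonzero `f : ℤ_N × ℤ_T → ℂ`. -/
theorem two_dim_uncertainty (N T : ℕ) [NeZero N] [NeZero T]
    (f : ZMod N × ZMod T → ℂ) (hf : f ≠ 0) :
    N * T ≤
      (Finset.univ.filter fun p : ZMod N × ZMod T => f p ≠ 0).card *
      (Finset.univ.filter fun p : ZMod N × ZMod T => dft2 N T f p ≠ 0).card := by
  set s : ℝ := 1 / √(N * T)
  have hs : 0 < s := one_div_pos.2 (Real.sqrt_pos.2 (natCast_mul_natCast_pos N T))
  have hs2 : s * s * (N * T) = 1 :=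
    one_div_sqrt_mul_one_div_sqrt_mul_self (natCast_mul_natCast_pos N T)
  have hunimodular (u : ZMod N) (v : ZMod T) : ‖(stdAddChar u * stdAddChar v : ℂ)‖ = 1 := by
    rw [norm_mul, norm_stdAddChar, norm_stdAddChar, one_mul]
  have hcard := one_le_mul_card_support_mul_card_support (g := dft2 N T f) hs.le hs.le hf
    (fun q => by
      rw [dft2_apply_eq_sum_stdAddChar]
      exact norm_ofReal_mul_sum_mul_le hs.le fun _ => hunimodular _ _)
    (fun a => by
      rw [dft2_inversion f a]
      exact norm_ofReal_mul_sum_mul_le hs.le fun _ => hunimodular _ _)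
  exact_mod_cast le_of_mul_le_mul_left (hs2.trans_le hcard) (by positivity)
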